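/- (Theorem 1, exclusion of compute-bound offloading) Suppose R·Σ_{i∈F} C_i ≤ Σ_{i∈F_mem} C_i·B_h/(B_h+B_g). Then every optimal feasible allocation x satisfies x_i = 0 for all compute-bound operations i ∈ F_comp and x_i ≤ B_h/(B_h+B_g) for all memory-bound operations i ∈ F_mem. -/

import Mathlib

open Finset

/-- Offloading model: a finite nonempty set of operations `F` partitioned into
memory-bound operations `Fmem` and compute-bound operations `Fcomp`; host-GPU
interconnect bandwidth `Bh > 0`, GPU memory bandwidth `Bg > 0`, per-operation
compute bandwidths `Bi i ≥ Bh` (for compute-bound ops) and data sizes `Cd i > 0`. -/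
structure OffloadModel (ι : Type*) [DecidableEq ι] where
  F : Finset ι
  Fmem : Finset ι
  Fcomp : Finset ι
  Bh : ℝ
  Bg : ℝ
  Bi : ι → ℝ
  Cd : ι → ℝ
  hF : F.Nonempty
  hpart : Fmem ∪ Fcomp = F
  hdisj : Disjoint Fmem Fcomp
  hBh : 0 < Bh
  hBg : 0 < Bg
  hBi : ∀ i ∈ Fcomp, Bh ≤ Bi i
  hC : ∀ i ∈ F, 0 < Cd i

variable {ι : Type*} [DecidableEq ι]

/-- Latency of operation `i` under per-operation offloading ratio `x`. -/
noncomputable def OffloadModel.T (M : OffloadModel ι) (i : ι) (x : ℝ) : ℝ :=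
  if i ∈ M.Fmem then M.Cd i * max (x / M.Bh) ((1 - x) / M.Bg)
  else M.Cd i * max (1 / M.Bi i) (x / M.Bh)

/-- Turning point of operation `i`. -/
noncomputable def OffloadModel.turning (M : OffloadModel ι) (i : ι) : ℝ :=
  if i ∈ M.Fmem then M.Bh / (M.Bh + M.Bg) else M.Bh / M.Bi i

/-- An allocation `x` is feasible for global offloading ratio `R`. -/
def OffloadModel.Feasible (M : OffloadModel ι) (R : ℝ) (x : ι → ℝ) : Prop :=
  (∀ i ∈ M.F, 0 ≤ x i ∧ x i ≤ 1) ∧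
  ∑ i ∈ M.F, M.Cd i * x i = R * ∑ i ∈ M.F, M.Cd i

/-- The objective: total latency of an allocation. -/
noncomputable def OffloadModel.L (M : OffloadModel ι) (x : ι → ℝ) : ℝ :=
  ∑ i ∈ M.F, M.T i (x i)

/-- A feasible allocation is optimal if it minimizes the objective among all
feasible allocations. -/
def OffloadModel.Optimal (M : OffloadModel ι) (R : ℝ) (x : ι → ℝ) : Prop :=
  M.Feasible R x ∧ ∀ y, M.Feasible R y → M.L x ≤ M.L y

/-!
Below the turning point `t = Bh / (Bh + Bg)` the latency of a memory-bound operation is strictly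
decreasing, while that of a compute-bound operation is nondecreasing everywhere and that of a
memory-bound operation is nondecreasing above `t`. So if some memory-bound operation lies strictly
below `t`, moving a little data onto it from a compute-bound operation with `x > 0`, or from a
memory-bound operation above `t`, preserves feasibility and strictly lowers the total latency.
If no memory-bound operation lies below `t`, the budget leaves no slack: the memory-bound
operations sit exactly at `t` and the compute-bound ones at `0`.
-/

open Set

theorem Finset.sum_apply_update {α β : Type*} [AddCommGroup β] {s : Finset ι} {j : ι}
    (hj : j ∈ s) (g : ι → α → β) (x : ι → α) (a : α) :
    ∑ i ∈ s, g i (Function.update x j a i) = ∑ i ∈ s, g i (x i) + (g j a - g j (x j)) := by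
  rw [← Finset.add_sum_erase s _ hj, ← Finset.add_sum_erase s _ hj, Function.update_self,
    Finset.sum_congr rfl fun i hi => by rw [Function.update_of_ne (Finset.ne_of_mem_erase hi)]]
  abel

theorem div_le_one_sub_div_iff {Bh Bg y : ℝ} (hBh : 0 < Bh) (hBg : 0 < Bg) :
    y / Bh ≤ (1 - y) / Bg ↔ y ≤ Bh / (Bh + Bg) := by
  rw [div_le_div_iff₀ hBh hBg, le_div_iff₀ (by positivity)]
  constructor <;> intro h <;> linarith

theorem one_sub_div_le_div_iff {Bh Bg y : ℝ} (hBh : 0 < Bh) (hBg : 0 < Bg) :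
    (1 - y) / Bg ≤ y / Bh ↔ Bh / (Bh + Bg) ≤ y := by
  rw [div_le_div_iff₀ hBg hBh, div_le_iff₀ (by positivity)]
  constructor <;> intro h <;> linarith

namespace OffloadModel

variable {M : OffloadModel ι}

theorem mem_F_of_mem_Fmem {i : ι} (hi : i ∈ M.Fmem) : i ∈ M.F :=
  M.hpart ▸ Finset.mem_union_left _ hi

theorem mem_F_of_mem_Fcomp {i : ι} (hi : i ∈ M.Fcomp) : i ∈ M.F :=
  M.hpart ▸ Finset.mem_union_right _ hi

theorem turning_pos : 0 < M.Bh / (M.Bh + M.Bg) :=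
  div_pos M.hBh (add_pos M.hBh M.hBg)

theorem turning_lt_one : M.Bh / (M.Bh + M.Bg) < 1 :=
  (div_lt_one (add_pos M.hBh M.hBg)).2 (lt_add_of_pos_right _ M.hBg)

theorem T_of_mem_of_le_turning {i : ι} (hi : i ∈ M.Fmem) {y : ℝ}
    (hy : y ≤ M.Bh / (M.Bh + M.Bg)) : M.T i y = M.Cd i * ((1 - y) / M.Bg) := by
  rw [T, if_pos hi, max_eq_right ((div_le_one_sub_div_iff M.hBh M.hBg).2 hy)]

theorem T_of_mem_of_turning_le {i : ι} (hi : i ∈ M.Fmem) {y : ℝ}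
    (hy : M.Bh / (M.Bh + M.Bg) ≤ y) : M.T i y = M.Cd i * (y / M.Bh) := by
  rw [T, if_pos hi, max_eq_left ((one_sub_div_le_div_iff M.hBh M.hBg).2 hy)]

theorem strictAntiOn_T_of_mem {i : ι} (hi : i ∈ M.Fmem) :
    StrictAntiOn (M.T i) (Iic (M.Bh / (M.Bh + M.Bg))) := by
  intro a ha b hb hab
  rw [T_of_mem_of_le_turning hi ha, T_of_mem_of_le_turning hi hb]
  have := M.hC i (mem_F_of_mem_Fmem hi)
  have := M.hBg
  gcongr

theorem monotoneOn_T_of_mem {i : ι} (hi : i ∈ M.Fmem) :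
    MonotoneOn (M.T i) (Ici (M.Bh / (M.Bh + M.Bg))) := by
  intro a ha b hb hab
  rw [T_of_mem_of_turning_le hi ha, T_of_mem_of_turning_le hi hb]
  have := M.hC i (mem_F_of_mem_Fmem hi)
  have := M.hBh
  gcongr

theorem monotone_T_of_comp {i : ι} (hi : i ∈ M.Fcomp) : Monotone (M.T i) := by
  intro a b hab
  have hi' : i ∉ M.Fmem := Finset.disjoint_right.1 M.hdisj hi
  have := M.hC i (mem_F_of_mem_Fcomp hi)
  have := M.hBh
  simp only [T, if_neg hi']
  gcongr

theorem Optimal.pair_le {R : ℝ} {x : ι → ℝ} (hopt : M.Optimal R x) {j m : ι} (hj : j ∈ M.F)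
    (hm : m ∈ M.F) (hjm : j ≠ m) {a b : ℝ} (ha : a ∈ Icc (0 : ℝ) 1) (hb : b ∈ Icc (0 : ℝ) 1)
    (hw : M.Cd j * a + M.Cd m * b = M.Cd j * x j + M.Cd m * x m) :
    M.T j (x j) + M.T m (x m) ≤ M.T j a + M.T m b := by
  obtain ⟨⟨hbox, hsum⟩, hmin⟩ := hopt
  set y := Function.update (Function.update x j a) m b
  have hyj : y j = a := by simp [y, hjm]
  have hym : y m = b := by simp [y]
  have hsum_y (g : ι → ℝ → ℝ) :
      ∑ i ∈ M.F, g i (y i) = ∑ i ∈ M.F, g i (x i) + (g j a - g j (x j)) + (g m b - g m (x m)) := by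
    rw [Finset.sum_apply_update hm, Finset.sum_apply_update hj, Function.update_of_ne hjm.symm]
  have hfeas : M.Feasible R y := by
    refine ⟨fun i hi => ?_, ?_⟩
    · by_cases him : i = m
      · exact him ▸ hym ▸ hb
      by_cases hij : i = j
      · exact hij ▸ hyj ▸ ha
      simpa [y, him, hij] using hbox i hi
    · rw [hsum_y fun i v => M.Cd i * v, ← hsum]
      linarith
  have := hmin y hfeas
  rw [L, L, hsum_y M.T] at this
  linarith

theorem Optimal.false_of_transfer {R : ℝ} {x : ι → ℝ} (hopt : M.Optimal R x) {j m : ι}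
    (hj : j ∈ M.F) (hm : m ∈ M.F) (hjm : j ≠ m) {l u : ℝ} (hl : 0 ≤ l) (hu : u ≤ 1)
    (hl_lt : l < x j) (hu_gt : x m < u) (hTj : MonotoneOn (M.T j) (Icc l (x j)))
    (hTm : StrictAntiOn (M.T m) (Icc (x m) u)) : False := by
  have hCj := M.hC j hj
  have hCm := M.hC m hm
  -- `δ` is the largest data volume that can move from `j` to `m` within `[l, x j]` and `[x m, u]`.
  set δ := min (M.Cd j * (x j - l)) (M.Cd m * (u - x m))
  have hδ : 0 < δ := lt_min (by nlinarith) (by nlinarith)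
  have hδj : δ / M.Cd j ≤ x j - l := (div_le_iff₀' hCj).2 (min_le_left _ _)
  have hδm : δ / M.Cd m ≤ u - x m := (div_le_iff₀' hCm).2 (min_le_right _ _)
  have hδj_pos := div_pos hδ hCj
  have hδm_pos := div_pos hδ hCm
  set a := x j - δ / M.Cd j
  set b := x m + δ / M.Cd m
  have ha : a ∈ Icc l (x j) := ⟨by linarith, by linarith⟩
  have hb : b ∈ Icc (x m) u := ⟨by linarith, by linarith⟩
  have hw : M.Cd j * a + M.Cd m * b = M.Cd j * x j + M.Cd m * x m := by
    simp only [a, b]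
    field_simp
    ring
  have hle := hopt.pair_le hj hm hjm ⟨by linarith, by linarith [hopt.1.1 j hj]⟩
    ⟨by linarith [hopt.1.1 m hm], by linarith⟩ hw
  have hTa := hTj ha ⟨hl_lt.le, le_rfl⟩ ha.2
  have hTb := hTm ⟨le_rfl, hu_gt.le⟩ hb (by linarith : x m < b)
  linarith

theorem Feasible.eq_of_budget {R : ℝ} {x : ι → ℝ} (hfeas : M.Feasible R x)
    (hbudget : R * ∑ i ∈ M.F, M.Cd i ≤ ∑ i ∈ M.Fmem, M.Cd i * (M.Bh / (M.Bh + M.Bg)))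
    (hge : ∀ i ∈ M.Fmem, M.Bh / (M.Bh + M.Bg) ≤ x i) :
    (∀ i ∈ M.Fcomp, x i = 0) ∧ (∀ i ∈ M.Fmem, M.Bh / (M.Bh + M.Bg) = x i) := by
  set t := M.Bh / (M.Bh + M.Bg)
  have hmem_le (i) (hi : i ∈ M.Fmem) : M.Cd i * t ≤ M.Cd i * x i :=
    mul_le_mul_of_nonneg_left (hge i hi) (M.hC i (mem_F_of_mem_Fmem hi)).le
  have hcomp_nonneg (i) (hi : i ∈ M.Fcomp) : 0 ≤ M.Cd i * x i :=
    mul_nonneg (M.hC i (mem_F_of_mem_Fcomp hi)).le (hfeas.1 i (mem_F_of_mem_Fcomp hi)).1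
  have hmem := Finset.sum_le_sum hmem_le
  have hcomp := Finset.sum_nonneg hcomp_nonneg
  have htotal :
      ∑ i ∈ M.Fmem, M.Cd i * x i + ∑ i ∈ M.Fcomp, M.Cd i * x i ≤ ∑ i ∈ M.Fmem, M.Cd i * t := by
    rw [← Finset.sum_union M.hdisj, M.hpart, hfeas.2]
    exact hbudget
  have hcomp_eq := (Finset.sum_eq_zero_iff_of_nonneg hcomp_nonneg).1 (by linarith)
  have hmem_eq := (Finset.sum_eq_sum_iff_of_le hmem_le).1 (by linarith)
  refine ⟨fun i hi => ?_, fun i hi => ?_⟩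
  · exact (mul_eq_zero.1 (hcomp_eq i hi)).resolve_left (M.hC i (mem_F_of_mem_Fcomp hi)).ne'
  · exact mul_left_cancel₀ (M.hC i (mem_F_of_mem_Fmem hi)).ne' (hmem_eq i hi)

end OffloadModel

open OffloadModel in
theorem stmt11_general (M : OffloadModel ι) (R : ℝ)
    (hbudget : R * ∑ i ∈ M.F, M.Cd i ≤
      ∑ i ∈ M.Fmem, M.Cd i * (M.Bh / (M.Bh + M.Bg)))
    (x : ι → ℝ) (hopt : M.Optimal R x) :
    (∀ i ∈ M.Fcomp, x i = 0) ∧ (∀ i ∈ M.Fmem, x i ≤ M.Bh / (M.Bh + M.Bg)) := by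
  set t := M.Bh / (M.Bh + M.Bg)
  have hx0 (i) (hi : i ∈ M.F) : 0 ≤ x i := (hopt.1.1 i hi).1
  by_cases hbelow : ∃ m ∈ M.Fmem, x m < t
  · obtain ⟨m, hm, hxm⟩ := hbelow
    have hTm := (strictAntiOn_T_of_mem hm).mono (Icc_subset_Iic_self (a := x m))
    refine ⟨fun j hj => ?_, fun k hk => ?_⟩
    · have hjm : j ≠ m := fun h => Finset.disjoint_left.1 M.hdisj (h ▸ hm) hj
      refine (hx0 j (mem_F_of_mem_Fcomp hj)).eq_of_not_lt' fun hxj => ?_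
      exact hopt.false_of_transfer (mem_F_of_mem_Fcomp hj) (mem_F_of_mem_Fmem hm) hjm le_rfl
        turning_lt_one.le hxj hxm ((monotone_T_of_comp hj).monotoneOn _) hTm
    · refine not_lt.1 fun hxk => ?_
      have hkm : k ≠ m := by rintro rfl; linarith
      exact hopt.false_of_transfer (mem_F_of_mem_Fmem hk) (mem_F_of_mem_Fmem hm) hkm
        turning_pos.le turning_lt_one.le hxk hxm
        ((monotoneOn_T_of_mem hk).mono Icc_subset_Ici_self) hTm
  · push Not at hbelow
    have h := hopt.1.eq_of_budget hbudget hbelow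
    exact ⟨h.1, fun i hi => (h.2 i hi).ge⟩

/-- Theorem 1 (exclusion of compute-bound offloading): if the budget fits within the
memory-bound turning points, every optimal feasible allocation offloads nothing from
compute-bound operations and keeps memory-bound ops at or below their turning point. -/
theorem stmt11 (M : OffloadModel ι) (R : ℝ) (hR0 : 0 ≤ R) (hR1 : R ≤ 1)
    (hbudget : R * ∑ i ∈ M.F, M.Cd i ≤
      ∑ i ∈ M.Fmem, M.Cd i * (M.Bh / (M.Bh + M.Bg)))
    (x : ι → ℝ) (hopt : M.Optimal R x) :
    (∀ i ∈ M.Fcomp, x i = 0) ∧ (∀ i ∈ M.Fmem, x i ≤ M.Bh / (M.Bh + M.Bg)) :=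
  stmt11_general M R hbudget x hopt
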